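/- Let $N_d^+, N_n^+, N_d^-, N_n^-$ be natural numbers with $N = N_d^+ + N_n^+ + N_d^- + N_n^-$ and $N_d^+ + N_d^- \ge 1$. Let $k^+ > 0$, $k^- < 0$ with $|k^-|/k^+ \ne N_d^+/N_d^-$ (i.e. $N_d^+ k^+ + N_d^- k^- \ne 0$), and let $k_1, \dots, k_N$ be nonzero reals with $k_j = k^+$ for $1 \le j \le N_d^+$, $k_j > 0$ for $N_d^+ < j \le N_d^+ + N_n^+$, $k_j = k^-$ for $N_d^+ + N_n^+ < j \le N_d^+ + N_n^+ + N_d^-$, and $k_j < 0$ for the remaining indices. Then for every tuple of continuous functions $f_j : [0,1] \to \mathbb{R}$ there exists a unique tuple $(\psi_1,\dots,\psi_N)$ of twice continuously differentiable functions $\psi_j : [0,1] \to \mathbb{R}$ satisfying: $-k_j \psi_j'' = f_j$ on $[0,1]$ for all $j$; $\psi_j(0) = 0$ for $1 \le j \le N_d^+$ and for $N_d^+ + N_n^+ < j \le N_d^+ + N_n^+ + N_d^-$; $\psi_j'(0) = 0$ for the remaining indices $j$; $\psi_l(1) = \psi_m(1)$ for all $1 \le l, m \le N$; and $\sum_{l=1}^{N}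 k_l \psi_l'(1) = 0$. -/

import Mathlib

/-!
On every edge the equation `-k ψ'' = f` has the two-parameter family of solutions
`ψ x = a + b x - (1/k) ∫₀ˣ ∫₀ᵗ f`. The condition at `x = 0` fixes one parameter per edge and
continuity at the vertex ties the other one to the common vertex value `c`; Kirchhoff's condition
then reads `(N_d⁺ k⁺ + N_d⁻ k⁻) c = (data)`, since only the Dirichlet edges carry a free slope.
For uniqueness, the difference of two solutions solves the homogeneous problem: it is affine on
each edge, equal to `c x` on Dirichlet edges and to `c` on Neumann edges, so Kirchhoff's
condition becomes `(N_d⁺ k⁺ + N_d⁻ k⁻) c = 0`.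
-/

/-- Classical solution of the mixed Dirichlet/Neumann star-network problem on `N` edges of
length `1`: Dirichlet condition `ψ j 0 = 0` for `j ∈ 1..Ndp` and for
`Ndp+Nnp < j ≤ Ndp+Nnp+Ndm`, Neumann condition `ψ j ' 0 = 0` for the remaining indices,
continuity and Kirchhoff conditions at the internal vertex `x = 1`. -/
def IsMixedStarSolution (N Ndp Nnp Ndm : ℕ) (k : ℕ → ℝ) (f : ℕ → ℝ → ℝ)
    (ψ : ℕ → ℝ → ℝ) : Prop :=
  (∀ j ∈ Finset.Icc 1 N, ContDiffOn ℝ 2 (ψ j) (Set.Icc 0 1)) ∧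
  (∀ j ∈ Finset.Icc 1 N, ∀ x ∈ Set.Icc (0 : ℝ) 1,
      -(k j * iteratedDerivWithin 2 (ψ j) (Set.Icc 0 1) x) = f j x) ∧
  (∀ j, 1 ≤ j → j ≤ Ndp → ψ j 0 = 0) ∧
  (∀ j, Ndp + Nnp < j → j ≤ Ndp + Nnp + Ndm → ψ j 0 = 0) ∧
  (∀ j, Ndp < j → j ≤ Ndp + Nnp → derivWithin (ψ j) (Set.Icc 0 1) 0 = 0) ∧
  (∀ j, Ndp + Nnp + Ndm < j → j ≤ N → derivWithin (ψ j) (Set.Icc 0 1) 0 = 0) ∧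
  (∀ l ∈ Finset.Icc 1 N, ∀ m ∈ Finset.Icc 1 N, ψ l 1 = ψ m 1) ∧
  (∑ l ∈ Finset.Icc 1 N, k l * derivWithin (ψ l) (Set.Icc 0 1) 1 = 0)

open Set

theorem ContinuousOn.exists_continuous_eqOn_Icc {α β : Type*} [LinearOrder α]
    [TopologicalSpace α] [OrderTopology α] [TopologicalSpace β] {f : α → β} {a b : α}
    (hab : a ≤ b) (hf : ContinuousOn f (Icc a b)) :
    ∃ g : α → β, Continuous g ∧ EqOn g f (Icc a b) :=
  ⟨IccExtend hab ((Icc a b).domRestrict f),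
    (continuousOn_iff_continuous_domRestrict.1 hf).Icc_extend',
    fun _ hx => IccExtend_of_mem hab _ hx⟩

section Calculus

variable {𝕜 F : Type*} [NontriviallyNormedField 𝕜] [NormedAddCommGroup F] [NormedSpace 𝕜 F]

theorem iteratedDerivWithin_two (f : 𝕜 → F) (s : Set 𝕜) :
    iteratedDerivWithin 2 f s = derivWithin (derivWithin f s) s := by
  rw [iteratedDerivWithin_succ', iteratedDerivWithin_one]

theorem contDiff_two_of_hasDerivAt {f f' f'' : 𝕜 → F} (hf : ∀ x, HasDerivAt f (f' x) x)
    (hf' : ∀ x, HasDerivAt f' (f'' x) x) (hf'' : Continuous f'') : ContDiff 𝕜 2 f := by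
  have hd : deriv f = f' := funext fun x => (hf x).deriv
  have hd' : deriv f' = f'' := funext fun x => (hf' x).deriv
  rw [show (2 : WithTop ℕ∞) = 1 + 1 from rfl, contDiff_succ_iff_deriv, hd,
    contDiff_one_iff_deriv, hd']
  exact ⟨fun x => (hf x).differentiableAt, by simp, fun x => (hf' x).differentiableAt, hf''⟩

theorem iteratedDeriv_two_eq_of_hasDerivAt {f f' f'' : 𝕜 → F} (hf : ∀ x, HasDerivAt f (f' x) x)
    (hf' : ∀ x, HasDerivAt f' (f'' x) x) (x : 𝕜) : iteratedDeriv 2 f x = f'' x := by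
  rw [iteratedDeriv_succ, iteratedDeriv_one, funext fun x => (hf x).deriv, (hf' x).deriv]

end Calculus

theorem eq_add_mul_sub_of_derivWithin_eq {f : ℝ → ℝ} {a b c : ℝ}
    (hf : DifferentiableOn ℝ f (Icc a b)) (hf' : ∀ x ∈ Ico a b, derivWithin f (Icc a b) x = c) :
    ∀ x ∈ Icc a b, f x = f a + c * (x - a) := by
  have hline : ∀ x, HasDerivAt (fun x => c * (x - a)) c x := fun x => by
    simpa using ((hasDerivAt_id x).sub_const a).const_mul c
  have hconst := constant_of_derivWithin_zero (f := fun x => f x - c * (x - a))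
    (hf.sub fun x _ => (hline x).differentiableAt.differentiableWithinAt) fun x hx => by
      have hab : a < b := hx.1.trans_lt hx.2
      have h := ((hf x (Ico_subset_Icc_self hx)).hasDerivWithinAt.sub
        (hline x).hasDerivWithinAt).derivWithin (uniqueDiffOn_Icc hab x (Ico_subset_Icc_self hx))
      rwa [hf' x hx, sub_self] at h
  intro x hx
  linarith [hconst x hx]

theorem derivWithin_eq_of_iteratedDerivWithin_two_eq_zero {f : ℝ → ℝ} {a b : ℝ} (hab : a < b)
    (hf : ContDiffOn ℝ 2 f (Icc a b))
    (hf'' : ∀ x ∈ Icc a b, iteratedDerivWithin 2 f (Icc a b) x = 0) :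
    ∀ x ∈ Icc a b, derivWithin f (Icc a b) x = derivWithin f (Icc a b) a := by
  have hd : DifferentiableOn ℝ (derivWithin f (Icc a b)) (Icc a b) :=
    (hf.derivWithin (m := 1) (uniqueDiffOn_Icc hab) (by norm_num)).differentiableOn one_ne_zero
  intro x hx
  simpa using eq_add_mul_sub_of_derivWithin_eq (c := 0) hd
    (fun y hy => by rw [← iteratedDerivWithin_two, hf'' y (Ico_subset_Icc_self hy)]) x hx

noncomputable def poissonSolution (g : ℝ → ℝ) (κ a b : ℝ) (x : ℝ) : ℝ :=
  a + b * x - (∫ t in (0 : ℝ)..x, ∫ s in (0 : ℝ)..t, g s) / κ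

section poissonSolution

variable {g : ℝ → ℝ} {κ : ℝ}

theorem poissonSolution_zero (g : ℝ → ℝ) (κ a b : ℝ) : poissonSolution g κ a b 0 = a := by
  simp [poissonSolution]

theorem hasDerivAt_poissonSolution (hg : Continuous g) (a b x : ℝ) :
    HasDerivAt (poissonSolution g κ a b) (b - (∫ t in (0 : ℝ)..x, g t) / κ) x := by
  have hprim : Continuous fun t => ∫ s in (0 : ℝ)..t, g s :=
    (intervalIntegral.differentiable_integral_of_continuous hg).continuous
  have hlin : HasDerivAt (fun x => a + b * x) b x := by
    simpa using ((hasDerivAt_id x).const_mul b).const_add a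
  exact hlin.sub (((hprim.integral_hasStrictDerivAt 0 x).hasDerivAt).div_const κ)

theorem hasDerivAt_poissonSolution_deriv (hg : Continuous g) (b x : ℝ) :
    HasDerivAt (fun x => b - (∫ t in (0 : ℝ)..x, g t) / κ) (-(g x / κ)) x :=
  (((hg.integral_hasStrictDerivAt 0 x).hasDerivAt).div_const κ).const_sub b

theorem contDiff_poissonSolution (hg : Continuous g) (a b : ℝ) :
    ContDiff ℝ 2 (poissonSolution g κ a b) :=
  contDiff_two_of_hasDerivAt (hasDerivAt_poissonSolution hg a b)
    (hasDerivAt_poissonSolution_deriv hg b) (hg.div_const κ).neg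

variable {s : Set ℝ} {x : ℝ}

theorem derivWithin_poissonSolution (hg : Continuous g) (a b : ℝ) (hs : UniqueDiffOn ℝ s)
    (hx : x ∈ s) :
    derivWithin (poissonSolution g κ a b) s x = b - (∫ t in (0 : ℝ)..x, g t) / κ :=
  (hasDerivAt_poissonSolution hg a b x).hasDerivWithinAt.derivWithin (hs x hx)

theorem neg_mul_iteratedDerivWithin_two_poissonSolution (hg : Continuous g) (hκ : κ ≠ 0)
    (a b : ℝ) (hs : UniqueDiffOn ℝ s) (hx : x ∈ s) :
    -(κ * iteratedDerivWithin 2 (poissonSolution g κ a b) s x) = g x := by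
  rw [iteratedDerivWithin_eq_iteratedDeriv hs (contDiff_poissonSolution hg a b).contDiffAt hx,
    iteratedDeriv_two_eq_of_hasDerivAt (hasDerivAt_poissonSolution hg a b)
      (hasDerivAt_poissonSolution_deriv hg b)]
  field_simp

end poissonSolution

def dirichletEdges (Ndp Nnp Ndm : ℕ) : Finset ℕ :=
  Finset.Icc 1 Ndp ∪ Finset.Ioc (Ndp + Nnp) (Ndp + Nnp + Ndm)

section Star

variable {N Ndp Nnp Ndm Nnm : ℕ} {k : ℕ → ℝ}

theorem mem_dirichletEdges {j : ℕ} :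
    j ∈ dirichletEdges Ndp Nnp Ndm ↔ 1 ≤ j ∧ j ≤ Ndp ∨ Ndp + Nnp < j ∧ j ≤ Ndp + Nnp + Ndm := by
  simp [dirichletEdges]

theorem mem_Icc_sdiff_dirichletEdges (hN : N = Ndp + Nnp + Ndm + Nnm) {j : ℕ} :
    j ∈ Finset.Icc 1 N \ dirichletEdges Ndp Nnp Ndm ↔
      Ndp < j ∧ j ≤ Ndp + Nnp ∨ Ndp + Nnp + Ndm < j ∧ j ≤ N := by
  simp only [Finset.mem_sdiff, Finset.mem_Icc, mem_dirichletEdges]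
  omega

theorem dirichletEdges_subset_Icc (hN : N = Ndp + Nnp + Ndm + Nnm) :
    dirichletEdges Ndp Nnp Ndm ⊆ Finset.Icc 1 N := fun j hj => by
  rw [mem_dirichletEdges] at hj
  rw [Finset.mem_Icc]
  omega

theorem sum_dirichletEdges {kp km : ℝ} (hk1 : ∀ j, 1 ≤ j → j ≤ Ndp → k j = kp)
    (hk3 : ∀ j, Ndp + Nnp < j → j ≤ Ndp + Nnp + Ndm → k j = km) :
    ∑ j ∈ dirichletEdges Ndp Nnp Ndm, k j = Ndp * kp + Ndm * km := by
  have hdisj : Disjoint (Finset.Icc 1 Ndp) (Finset.Ioc (Ndp + Nnp) (Ndp + Nnp + Ndm)) := by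
    rw [Finset.disjoint_left]
    intro j h1 h2
    simp only [Finset.mem_Icc, Finset.mem_Ioc] at h1 h2
    omega
  rw [dirichletEdges, Finset.sum_union hdisj,
    Finset.sum_congr rfl fun j hj => hk1 j (Finset.mem_Icc.1 hj).1 (Finset.mem_Icc.1 hj).2,
    Finset.sum_congr rfl fun j hj => hk3 j (Finset.mem_Ioc.1 hj).1 (Finset.mem_Ioc.1 hj).2]
  simp

theorem isMixedStarSolution_iff (hN : N = Ndp + Nnp + Ndm + Nnm) {f ψ : ℕ → ℝ → ℝ} :
    IsMixedStarSolution N Ndp Nnp Ndm k f ψ ↔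
      (∀ j ∈ Finset.Icc 1 N, ContDiffOn ℝ 2 (ψ j) (Set.Icc 0 1)) ∧
      (∀ j ∈ Finset.Icc 1 N, ∀ x ∈ Set.Icc (0 : ℝ) 1,
        -(k j * iteratedDerivWithin 2 (ψ j) (Set.Icc 0 1) x) = f j x) ∧
      (∀ j ∈ dirichletEdges Ndp Nnp Ndm, ψ j 0 = 0) ∧
      (∀ j ∈ Finset.Icc 1 N \ dirichletEdges Ndp Nnp Ndm,
        derivWithin (ψ j) (Set.Icc 0 1) 0 = 0) ∧
      (∀ l ∈ Finset.Icc 1 N, ∀ m ∈ Finset.Icc 1 N, ψ l 1 = ψ m 1) ∧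
      (∑ l ∈ Finset.Icc 1 N, k l * derivWithin (ψ l) (Set.Icc 0 1) 1 = 0) := by
  simp only [IsMixedStarSolution, mem_dirichletEdges, mem_Icc_sdiff_dirichletEdges hN, or_imp,
    forall_and, and_imp, and_assoc]

theorem IsMixedStarSolution.sub (hN : N = Ndp + Nnp + Ndm + Nnm) {f g φ ψ : ℕ → ℝ → ℝ}
    (hφ : IsMixedStarSolution N Ndp Nnp Ndm k f φ)
    (hψ : IsMixedStarSolution N Ndp Nnp Ndm k g ψ) :
    IsMixedStarSolution N Ndp Nnp Ndm k (f - g) (φ - ψ) := by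
  rw [isMixedStarSolution_iff hN] at *
  obtain ⟨hφC, hφode, hφD, hφN, hφc, hφK⟩ := hφ
  obtain ⟨hψC, hψode, hψD, hψN, hψc, hψK⟩ := hψ
  have hderiv : ∀ j ∈ Finset.Icc 1 N, ∀ x ∈ Icc (0 : ℝ) 1, derivWithin ((φ - ψ) j) (Icc 0 1) x =
      derivWithin (φ j) (Icc 0 1) x - derivWithin (ψ j) (Icc 0 1) x := fun j hj x hx =>
    derivWithin_sub ((hφC j hj).differentiableOn two_ne_zero x hx)
      ((hψC j hj).differentiableOn two_ne_zero x hx)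
  have h0 : (0 : ℝ) ∈ Icc (0 : ℝ) 1 := left_mem_Icc.2 zero_le_one
  have h1 : (1 : ℝ) ∈ Icc (0 : ℝ) 1 := right_mem_Icc.2 zero_le_one
  refine ⟨fun j hj => (hφC j hj).sub (hψC j hj), fun j hj x hx => ?_, fun j hj => ?_,
    fun j hj => ?_, fun l hl m hm => ?_, ?_⟩
  · rw [Pi.sub_apply, iteratedDerivWithin_sub hx uniqueDiffOn_Icc_zero_one (hφC j hj x hx)
      (hψC j hj x hx), Pi.sub_apply, Pi.sub_apply, ← hφode j hj x hx, ← hψode j hj x hx]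
    ring
  · simp [hφD j hj, hψD j hj]
  · rw [hderiv j (Finset.sdiff_subset hj) 0 h0, hφN j hj, hψN j hj, sub_zero]
  · simp [hφc l hl m hm, hψc l hl m hm]
  · rw [Finset.sum_congr rfl fun l hl => by rw [hderiv l hl 1 h1, mul_sub],
      Finset.sum_sub_distrib, hφK, hψK, sub_zero]

theorem IsMixedStarSolution.eq_zero (hN : N = Ndp + Nnp + Ndm + Nnm) {kp km : ℝ}
    (hres : (Ndp : ℝ) * kp + (Ndm : ℝ) * km ≠ 0) (hknz : ∀ j ∈ Finset.Icc 1 N, k j ≠ 0)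
    (hk1 : ∀ j, 1 ≤ j → j ≤ Ndp → k j = kp)
    (hk3 : ∀ j, Ndp + Nnp < j → j ≤ Ndp + Nnp + Ndm → k j = km) {w : ℕ → ℝ → ℝ}
    (hw : IsMixedStarSolution N Ndp Nnp Ndm k 0 w) {j : ℕ} (hj : j ∈ Finset.Icc 1 N) {x : ℝ}
    (hx : x ∈ Icc (0 : ℝ) 1) : w j x = 0 := by
  rw [isMixedStarSolution_iff hN] at hw
  obtain ⟨hC, hode, hD, hNeu, hcont, hK⟩ := hw
  set D := dirichletEdges Ndp Nnp Ndm
  set b : ℕ → ℝ := fun l => derivWithin (w l) (Icc 0 1) 0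
  have h1 : (1 : ℝ) ∈ Icc (0 : ℝ) 1 := right_mem_Icc.2 zero_le_one
  have hflat : ∀ l ∈ Finset.Icc 1 N, ∀ y ∈ Icc (0 : ℝ) 1,
      iteratedDerivWithin 2 (w l) (Icc 0 1) y = 0 := fun l hl y hy =>
    (mul_eq_zero.1 (neg_eq_zero.1 (hode l hl y hy))).resolve_left (hknz l hl)
  have hderiv : ∀ l ∈ Finset.Icc 1 N, ∀ y ∈ Icc (0 : ℝ) 1, derivWithin (w l) (Icc 0 1) y = b l :=
    fun l hl => derivWithin_eq_of_iteratedDerivWithin_two_eq_zero zero_lt_one (hC l hl)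
      (hflat l hl)
  have haff : ∀ l ∈ Finset.Icc 1 N, ∀ y ∈ Icc (0 : ℝ) 1, w l y = w l 0 + b l * y :=
    fun l hl y hy => by
      simpa using eq_add_mul_sub_of_derivWithin_eq ((hC l hl).differentiableOn two_ne_zero)
        (fun z hz => hderiv l hl z (Ico_subset_Icc_self hz)) y hy
  set γ := w j 1
  have hbD : ∀ l ∈ D, b l = γ := fun l hl => by
    have hl' := dirichletEdges_subset_Icc hN hl
    simpa [hD l hl, hcont l hl' j hj] using (haff l hl' 1 h1).symm
  have hKγ : ((Ndp : ℝ) * kp + Ndm * km) * γ = 0 := calc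
    _ = ∑ l ∈ D, k l * b l := by
      rw [← sum_dirichletEdges hk1 hk3, Finset.sum_mul]
      exact Finset.sum_congr rfl fun l hl => by rw [hbD l hl]
    _ = ∑ l ∈ Finset.Icc 1 N, k l * b l :=
      Finset.sum_subset (dirichletEdges_subset_Icc hN) fun l hl hlD => by
        rw [show b l = 0 from hNeu l (Finset.mem_sdiff.2 ⟨hl, hlD⟩), mul_zero]
    _ = 0 := by rw [← hK]; exact Finset.sum_congr rfl fun l hl => by rw [hderiv l hl 1 h1]
  have hγ : γ = 0 := (mul_eq_zero.1 hKγ).resolve_left hres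
  by_cases hjD : j ∈ D
  · rw [haff j hj x hx, hD j hjD, hbD j hjD, hγ, zero_mul, add_zero]
  · have hb : b j = 0 := hNeu j (Finset.mem_sdiff.2 ⟨hj, hjD⟩)
    have hvertex := haff j hj 1 h1
    rw [hb, zero_mul, add_zero] at hvertex
    rw [haff j hj x hx, hb, zero_mul, add_zero, ← hvertex]
    exact hγ

theorem exists_isMixedStarSolution (hN : N = Ndp + Nnp + Ndm + Nnm) {kp km : ℝ}
    (hres : (Ndp : ℝ) * kp + (Ndm : ℝ) * km ≠ 0) (hknz : ∀ j ∈ Finset.Icc 1 N, k j ≠ 0)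
    (hk1 : ∀ j, 1 ≤ j → j ≤ Ndp → k j = kp)
    (hk3 : ∀ j, Ndp + Nnp < j → j ≤ Ndp + Nnp + Ndm → k j = km) {f : ℕ → ℝ → ℝ}
    (hf : ∀ j ∈ Finset.Icc 1 N, ContinuousOn (f j) (Icc 0 1)) :
    ∃ ψ, IsMixedStarSolution N Ndp Nnp Ndm k f ψ := by
  choose! g hg hgf using fun j hj => (hf j hj).exists_continuous_eqOn_Icc zero_le_one
  set D := dirichletEdges Ndp Nnp Ndm
  have hDsub := dirichletEdges_subset_Icc hN
  have h0 : (0 : ℝ) ∈ Icc (0 : ℝ) 1 := left_mem_Icc.2 zero_le_one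
  have h1 : (1 : ℝ) ∈ Icc (0 : ℝ) 1 := right_mem_Icc.2 zero_le_one
  set G : ℕ → ℝ := fun j => ∫ t in (0 : ℝ)..1, ∫ s in (0 : ℝ)..t, g j s
  set F : ℕ → ℝ := fun j => ∫ t in (0 : ℝ)..1, g j t
  -- `c` is the common vertex value; Kirchhoff's condition forces this choice.
  set c : ℝ := (∑ j ∈ Finset.Icc 1 N, F j - ∑ j ∈ D, G j) / (Ndp * kp + Ndm * km)
  set a : ℕ → ℝ := fun j => if j ∈ D then 0 else c + G j / k j
  set b : ℕ → ℝ := fun j => if j ∈ D then c + G j / k j else 0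
  refine ⟨fun j => poissonSolution (g j) (k j) (a j) (b j), (isMixedStarSolution_iff hN).2
    ⟨fun j hj => (contDiff_poissonSolution (hg j hj) _ _).contDiffOn, fun j hj x hx => ?_,
      fun j hj => ?_, fun j hj => ?_, fun l hl m hm => ?_, ?_⟩⟩
  · rw [neg_mul_iteratedDerivWithin_two_poissonSolution (hg j hj) (hknz j hj) _ _
      uniqueDiffOn_Icc_zero_one hx, hgf j hj hx]
  · simp [poissonSolution_zero, a, show j ∈ D from hj]
  · rw [derivWithin_poissonSolution (hg j (Finset.sdiff_subset hj)) _ _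
      uniqueDiffOn_Icc_zero_one h0]
    simp [b, show j ∉ D from (Finset.mem_sdiff.1 hj).2]
  · have hvertex : ∀ j, poissonSolution (g j) (k j) (a j) (b j) 1 = c := fun j => by
      by_cases hjD : j ∈ D <;> simp [poissonSolution, a, b, hjD, G]
    rw [hvertex, hvertex]
  · have hkb : ∀ j ∈ Finset.Icc 1 N, k j * b j = if j ∈ D then k j * c + G j else 0 := by
      intro j hj
      by_cases hjD : j ∈ D
      · simp only [b, if_pos hjD]
        field_simp [hknz j hj]
      · simp [b, hjD]
    calc _ = ∑ j ∈ Finset.Icc 1 N, (k j * b j - F j) := Finset.sum_congr rfl fun j hj => by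
            rw [derivWithin_poissonSolution (hg j hj) _ _ uniqueDiffOn_Icc_zero_one h1, mul_sub,
              mul_div_cancel₀ _ (hknz j hj)]
      _ = (Ndp * kp + Ndm * km) * c + ∑ j ∈ D, G j - ∑ j ∈ Finset.Icc 1 N, F j := by
            rw [Finset.sum_sub_distrib, Finset.sum_congr rfl hkb, Finset.sum_ite_mem,
              Finset.inter_eq_right.2 hDsub, Finset.sum_add_distrib, ← Finset.sum_mul,
              sum_dirichletEdges hk1 hk3]
      _ = 0 := by
            simp only [c]
            field_simp
            ring

end Star

theorem stmt_6_general (Ndp Nnp Ndm Nnm N : ℕ) (hN : N = Ndp + Nnp + Ndm + Nnm)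
    (kp km : ℝ)
    (hres : (Ndp : ℝ) * kp + (Ndm : ℝ) * km ≠ 0)
    (k : ℕ → ℝ) (hknz : ∀ j ∈ Finset.Icc 1 N, k j ≠ 0)
    (hk1 : ∀ j, 1 ≤ j → j ≤ Ndp → k j = kp)
    (hk3 : ∀ j, Ndp + Nnp < j → j ≤ Ndp + Nnp + Ndm → k j = km)
    (f : ℕ → ℝ → ℝ) (hf : ∀ j ∈ Finset.Icc 1 N, ContinuousOn (f j) (Set.Icc 0 1)) :
    ∃ ψ : ℕ → ℝ → ℝ, IsMixedStarSolution N Ndp Nnp Ndm k f ψ ∧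
      ∀ φ : ℕ → ℝ → ℝ, IsMixedStarSolution N Ndp Nnp Ndm k f φ →
        ∀ j ∈ Finset.Icc 1 N, ∀ x ∈ Set.Icc (0 : ℝ) 1, φ j x = ψ j x := by
  obtain ⟨ψ, hψ⟩ := exists_isMixedStarSolution hN hres hknz hk1 hk3 hf
  refine ⟨ψ, hψ, fun φ hφ j hj x hx => ?_⟩
  have hhom := hφ.sub hN hψ
  rw [sub_self] at hhom
  exact sub_eq_zero.1 (hhom.eq_zero hN hres hknz hk1 hk3 hj hx)

/-- Well-posedness for an equilateral star network with mixed Dirichlet and Neumann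
external boundary conditions (Theorem 3.1): `Ndp` dielectric Dirichlet edges of
conductivity `k⁺`, `Nnp` dielectric Neumann edges, `Ndm` metamaterial Dirichlet edges of
conductivity `k⁻`, `Nnm` metamaterial Neumann edges, provided
`Ndp·k⁺ + Ndm·k⁻ ≠ 0`. -/
theorem stmt_6 (Ndp Nnp Ndm Nnm N : ℕ) (hN : N = Ndp + Nnp + Ndm + Nnm)
    (hd : 1 ≤ Ndp + Ndm)
    (kp km : ℝ) (hkp : 0 < kp) (hkm : km < 0)
    (hres : (Ndp : ℝ) * kp + (Ndm : ℝ) * km ≠ 0)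
    (k : ℕ → ℝ) (hknz : ∀ j ∈ Finset.Icc 1 N, k j ≠ 0)
    (hk1 : ∀ j, 1 ≤ j → j ≤ Ndp → k j = kp)
    (hk2 : ∀ j, Ndp < j → j ≤ Ndp + Nnp → 0 < k j)
    (hk3 : ∀ j, Ndp + Nnp < j → j ≤ Ndp + Nnp + Ndm → k j = km)
    (hk4 : ∀ j, Ndp + Nnp + Ndm < j → j ≤ N → k j < 0)
    (f : ℕ → ℝ → ℝ) (hf : ∀ j ∈ Finset.Icc 1 N, ContinuousOn (f j) (Set.Icc 0 1)) :
    ∃ ψ : ℕ → ℝ → ℝ, IsMixedStarSolution N Ndp Nnp Ndm k f ψ ∧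
      ∀ φ : ℕ → ℝ → ℝ, IsMixedStarSolution N Ndp Nnp Ndm k f φ →
        ∀ j ∈ Finset.Icc 1 N, ∀ x ∈ Set.Icc (0 : ℝ) 1, φ j x = ψ j x :=
  stmt_6_general Ndp Nnp Ndm Nnm N hN kp km hres k hknz hk1 hk3 f hf
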